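/- If the images (random variables) X_1,...,X_m are partitioned into independent groups by partition P*, i.e., the tuples (X^C)_{C∈P*} are mutually independent, and |P*| > 1, then P* minimizes the partition information over all partitions with more than one cluster, and the minimum partition information is zero. Moreover, any partition P with I_P = 0 is coarser than or equal to a refinement structure consistent with P* whenever variables within each cluster of P* are pairwise dependent. -/

import Mathlib

/-!
Joint entropy `S ↦ H(X^S)` vanishes on `∅` and is submodular (conditional mutual information
is nonnegative, by Gibbs' inequality), hence subadditive over disjoint sets; so `I_P ≥ 0` for
every partition, while independence of the blocks of `P*` gives `I_{P*} = 0`. If `I_P = 0`,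
each block `C` of `P` together with its complement splits `H(X^{[m]})` additively, and
submodularity transfers this to every subset: `H(X^{A ∩ C}) + H(X^{A \ C}) ≤ H(X^A)`. For a
block `A` of `P*` meeting `C` this says that `A ∩ C` and `A \ C` have zero mutual information,
so `A \ C = ∅` by hypothesis.
-/

open Finset
open scoped Classical

/-- Shannon entropy (in bits) of the distribution of a random variable `Y` on a finite
probability space with weights `μ`. -/
noncomputable def ent {Ω β : Type*} [Fintype Ω] [Fintype β] [DecidableEq β]
    (μ : Ω → ℝ) (Y : Ω → β) : ℝ :=
  -∑ b : β, (∑ ω ∈ univ.filter (fun ω => Y ω = b), μ ω) *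
      Real.logb 2 (∑ ω ∈ univ.filter (fun ω => Y ω = b), μ ω)

/-- Joint entropy `H(Z^S)` of the sub-collection of variables indexed by `S`. -/
noncomputable def entS {Ω β : Type*} [Fintype Ω] [Fintype β] [DecidableEq β] {n : ℕ}
    (μ : Ω → ℝ) (Z : Fin n → Ω → β) (S : Finset (Fin n)) : ℝ :=
  ent μ (fun ω => fun i : {x // x ∈ S} => Z i ω)

/-- Mutual information `I(Z^A; Z^B)` between two sub-collections of variables. -/
noncomputable def miS {Ω β : Type*} [Fintype Ω] [Fintype β] [DecidableEq β] {n : ℕ}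
    (μ : Ω → ℝ) (Z : Fin n → Ω → β) (A B : Finset (Fin n)) : ℝ :=
  entS μ Z A + entS μ Z B -
    ent μ (fun ω => ((fun i : {x // x ∈ A} => Z i ω), (fun i : {x // x ∈ B} => Z i ω)))

/-- Partition information of the partition given by `f : Fin k → Finset (Fin m)`. -/
noncomputable def partInfo {Ω β : Type*} [Fintype Ω] [Fintype β] [DecidableEq β] {m : ℕ}
    (μ : Ω → ℝ) (X : Fin m → Ω → β) {k : ℕ} (f : Fin k → Finset (Fin m)) : ℝ :=
  (1 / ((k : ℝ) - 1)) * ((∑ i, entS μ X (f i)) - entS μ X Finset.univ)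

lemma sum_mul_logb_le_sum_mul_logb {ι : Type*} [Fintype ι] {p q : ι → ℝ} {b : ℝ} (hb : 1 < b)
    (hp : ∀ i, 0 ≤ p i) (hq : ∀ i, 0 ≤ q i) (hpq : ∀ i, p i ≠ 0 → q i ≠ 0)
    (hsum : ∑ i, q i ≤ ∑ i, p i) :
    ∑ i, p i * Real.logb b (q i) ≤ ∑ i, p i * Real.logb b (p i) := by
  have hlogb : 0 < Real.log b := Real.log_pos hb
  suffices ∀ i, p i * Real.logb b (q i) - p i * Real.logb b (p i) ≤ (q i - p i) / Real.log b by
    have := Finset.sum_le_sum fun i (_ : i ∈ univ) => this i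
    rw [Finset.sum_sub_distrib, ← Finset.sum_div, Finset.sum_sub_distrib] at this
    linarith [div_nonpos_of_nonpos_of_nonneg (sub_nonpos.2 hsum) hlogb.le]
  intro i
  rcases (hp i).eq_or_lt with h0 | hpos
  · rw [← h0]
    simpa using div_nonneg (hq i) hlogb.le
  have hqpos : 0 < q i := (hq i).lt_of_ne (hpq i hpos.ne').symm
  -- `p log (q / p) ≤ p (q / p - 1) = q - p`
  have key := mul_le_mul_of_nonneg_left
    (Real.log_le_sub_one_of_pos (div_pos hqpos hpos)) hpos.le
  rw [Real.log_div hqpos.ne' hpos.ne', mul_sub_one, mul_div_cancel₀ _ hpos.ne'] at key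
  rw [Real.logb, Real.logb, ← mul_div_assoc, ← mul_div_assoc, ← sub_div]
  exact div_le_div_of_nonneg_right (by linarith) hlogb.le

section Entropy

variable {Ω : Type*} [Fintype Ω] {μ : Ω → ℝ}
  {γ γ₁ γ₂ γ₃ : Type*} [DecidableEq γ] [DecidableEq γ₁] [DecidableEq γ₂] [DecidableEq γ₃]

noncomputable def prob (μ : Ω → ℝ) (Y : Ω → γ) (b : γ) : ℝ :=
  ∑ ω ∈ univ.filter (fun ω => Y ω = b), μ ω

lemma sum_prob_mul [Fintype γ] (μ : Ω → ℝ) (Y : Ω → γ) (F : γ → ℝ) :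
    ∑ b, prob μ Y b * F b = ∑ ω, μ ω * F (Y ω) := by
  simp_rw [prob, Finset.sum_mul]
  rw [← Finset.sum_fiberwise univ Y]
  refine Finset.sum_congr rfl fun b _ => Finset.sum_congr rfl fun ω hω => ?_
  rw [(Finset.mem_filter.1 hω).2]

lemma sum_prob [Fintype γ] (μ : Ω → ℝ) (Y : Ω → γ) : ∑ b, prob μ Y b = ∑ ω, μ ω := by
  simpa using sum_prob_mul μ Y 1

lemma ent_eq_neg_sum [Fintype γ] (μ : Ω → ℝ) (Y : Ω → γ) :
    ent μ Y = -∑ ω, μ ω * Real.logb 2 (prob μ Y (Y ω)) :=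
  congrArg Neg.neg (sum_prob_mul μ Y fun b => Real.logb 2 (prob μ Y b))

lemma prob_nonneg (hμ : ∀ ω, 0 ≤ μ ω) (Y : Ω → γ) (b : γ) : 0 ≤ prob μ Y b :=
  Finset.sum_nonneg fun ω _ => hμ ω

lemma prob_le_prob (hμ : ∀ ω, 0 ≤ μ ω) {Y : Ω → γ₁} {Z : Ω → γ₂} {a : γ₁} {b : γ₂}
    (h : ∀ ω, Y ω = a → Z ω = b) : prob μ Y a ≤ prob μ Z b :=
  Finset.sum_le_sum_of_subset_of_nonneg (fun ω hω => by simp_all) fun ω _ _ => hμ ω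

lemma le_prob_self (hμ : ∀ ω, 0 ≤ μ ω) (Y : Ω → γ) (ω : Ω) : μ ω ≤ prob μ Y (Y ω) :=
  Finset.single_le_sum (fun ω _ => hμ ω) (by simp)

lemma sum_prob_prod_mk [Fintype γ₂] (μ : Ω → ℝ) (V : Ω → γ₁) (W : Ω → γ₂) (v : γ₁) :
    ∑ w, prob μ (fun ω => (V ω, W ω)) (v, w) = prob μ V v := by
  simp_rw [prob]
  rw [← Finset.sum_fiberwise (univ.filter fun ω => V ω = v) W]
  refine Finset.sum_congr rfl fun w _ => ?_
  rw [Finset.filter_filter]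
  simp [Prod.ext_iff]

lemma ent_eq_ent_of_eq_iff [Fintype γ₁] [Fintype γ₂] {Y : Ω → γ₁} {Z : Ω → γ₂}
    (h : ∀ ω ω', Y ω' = Y ω ↔ Z ω' = Z ω) : ent μ Y = ent μ Z := by
  have hprob : ∀ ω, prob μ Y (Y ω) = prob μ Z (Z ω) := fun ω =>
    Finset.sum_congr (Finset.filter_congr fun ω' _ => h ω ω') fun _ _ => rfl
  simp only [ent_eq_neg_sum, hprob]

lemma ent_const [Fintype γ] (hsum : ∑ ω, μ ω = 1) (c : γ) : ent μ (fun _ => c) = 0 := by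
  simp [ent_eq_neg_sum, prob, hsum]

lemma ent_pi_eq_sum_of_indep {ι : Type*} [Fintype ι] [DecidableEq ι] {γ : ι → Type*}
    [∀ i, Fintype (γ i)] [∀ i, DecidableEq (γ i)] (hμ : ∀ ω, 0 ≤ μ ω) (Y : ∀ i, Ω → γ i)
    (hindep : ∀ v : ∀ i, γ i, prob μ (fun ω i => Y i ω) v = ∏ i, prob μ (Y i) (v i)) :
    ent μ (fun ω i => Y i ω) = ∑ i, ent μ (Y i) := by
  simp only [ent_eq_neg_sum, hindep]
  rw [Finset.sum_neg_distrib, Finset.sum_comm, neg_inj]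
  refine Finset.sum_congr rfl fun ω _ => ?_
  rw [← Finset.mul_sum]
  rcases (hμ ω).eq_or_lt with h0 | hpos
  · simp [← h0]
  rw [Real.logb_prod _ _ fun i _ => (hpos.trans_le (le_prob_self hμ (Y i) ω)).ne']

lemma ent_submodular [Fintype γ₁] [Fintype γ₂] [Fintype γ₃] (hμ : ∀ ω, 0 ≤ μ ω)
    (U : Ω → γ₁) (V : Ω → γ₂) (W : Ω → γ₃) :
    ent μ V + ent μ (fun ω => (U ω, V ω, W ω)) ≤
      ent μ (fun ω => (U ω, V ω)) + ent μ (fun ω => (V ω, W ω)) := by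
  set p := prob μ fun ω => (U ω, V ω, W ω)
  set pUV := prob μ fun ω => (U ω, V ω)
  set pVW := prob μ fun ω => (V ω, W ω)
  set pV := prob μ V
  -- the law under which `U` and `W` are conditionally independent given `V`
  set q : γ₁ × γ₂ × γ₃ → ℝ := fun x => pUV (x.1, x.2.1) * pVW x.2 / pV x.2.1
  have hmarg : ∀ x, p x ≠ 0 → pUV (x.1, x.2.1) ≠ 0 ∧ pVW x.2 ≠ 0 ∧ pV x.2.1 ≠ 0 := by
    intro x hx
    have hpos := (prob_nonneg hμ _ x).lt_of_ne' hx
    refine ⟨(hpos.trans_le (prob_le_prob hμ ?_)).ne', (hpos.trans_le (prob_le_prob hμ ?_)).ne',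
      (hpos.trans_le (prob_le_prob hμ ?_)).ne'⟩ <;> rintro ω rfl <;> rfl
  have hq_sum : ∑ x, q x ≤ ∑ x, p x :=
    calc ∑ x, q x = ∑ u, ∑ v, pUV (u, v) * (pV v / pV v) := by
          simp only [q, pVW, Fintype.sum_prod_type, ← Finset.sum_div, ← Finset.mul_sum,
            mul_div_assoc, sum_prob_prod_mk, pV]
      _ ≤ ∑ u, ∑ v, pUV (u, v) := by
          gcongr with u _ v _
          exact mul_le_of_le_one_right (prob_nonneg hμ _ _) (div_self_le_one _)
      _ = ∑ x, p x := by rw [← Fintype.sum_prod_type', sum_prob, sum_prob]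
  have hq_nonneg : ∀ x, 0 ≤ q x := fun x =>
    div_nonneg (mul_nonneg (prob_nonneg hμ _ _) (prob_nonneg hμ _ _)) (prob_nonneg hμ _ _)
  have gibbs := sum_mul_logb_le_sum_mul_logb one_lt_two (prob_nonneg hμ _) hq_nonneg
    (fun x hx => have h := hmarg x hx; div_ne_zero (mul_ne_zero h.1 h.2.1) h.2.2) hq_sum
  have hlog_q : ∀ x, p x * Real.logb 2 (q x) = p x * (Real.logb 2 (pUV (x.1, x.2.1)) +
      Real.logb 2 (pVW x.2) - Real.logb 2 (pV x.2.1)) := by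
    intro x
    by_cases hx : p x = 0
    · simp [hx]
    obtain ⟨h1, h2, h3⟩ := hmarg x hx
    rw [Real.logb_div (mul_ne_zero h1 h2) h3, Real.logb_mul h1 h2]
  simp only [hlog_q, p, sum_prob_mul, mul_sub, mul_add, Finset.sum_add_distrib,
    Finset.sum_sub_distrib] at gibbs
  simp only [ent_eq_neg_sum]
  linarith

end Entropy

def IsSubmodular {α : Type*} [DecidableEq α] (h : Finset α → ℝ) : Prop :=
  ∀ S T, h (S ∪ T) + h (S ∩ T) ≤ h S + h T

namespace IsSubmodular

variable {α : Type*} [DecidableEq α] {h : Finset α → ℝ}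

lemma le_add_of_disjoint (hh : IsSubmodular h) (h_empty : h ∅ = 0) {S T : Finset α}
    (hST : Disjoint S T) : h (S ∪ T) ≤ h S + h T := by
  simpa [disjoint_iff_inter_eq_empty.1 hST, h_empty] using hh S T

lemma le_sum_of_pairwiseDisjoint (hh : IsSubmodular h) (h_empty : h ∅ = 0) {ι : Type*}
    [DecidableEq ι] {s : Finset ι} {g : ι → Finset α} (hg : (s : Set ι).PairwiseDisjoint g) :
    h (s.biUnion g) ≤ ∑ i ∈ s, h (g i) := by
  induction s using Finset.induction_on with
  | empty => simp [h_empty]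
  | insert a s ha ih =>
    rw [coe_insert, Set.pairwiseDisjoint_insert_of_notMem ha] at hg
    rw [biUnion_insert, sum_insert ha]
    exact (hh.le_add_of_disjoint h_empty ((disjoint_biUnion_right _ _ _).2 hg.2)).trans
      (add_le_add le_rfl (ih hg.1))

lemma inter_add_sdiff_le [Fintype α] (hh : IsSubmodular h) {P : Finset α}
    (hP : h P + h Pᶜ ≤ h univ) (S : Finset α) : h (S ∩ P) + h (S \ P) ≤ h S := by
  have h₁ := hh P (S ∩ P ∪ Pᶜ)
  have h₂ := hh S Pᶜ
  rw [show P ∪ (S ∩ P ∪ Pᶜ) = univ by ext; simp; tauto,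
    show P ∩ (S ∩ P ∪ Pᶜ) = S ∩ P by ext; simp; tauto] at h₁
  rw [show S ∪ Pᶜ = S ∩ P ∪ Pᶜ by ext; simp; tauto, ← sdiff_eq_inter_compl] at h₂
  linarith

lemma add_compl_le_of_sum_le [Fintype α] (hh : IsSubmodular h) (h_empty : h ∅ = 0)
    {ι : Type*} [Fintype ι] [DecidableEq ι] {g : ι → Finset α}
    (hdisj : ∀ i j, i ≠ j → Disjoint (g i) (g j))
    (hcover : univ.biUnion g = univ) (hsum : ∑ i, h (g i) ≤ h univ) (j : ι) :
    h (g j) + h (g j)ᶜ ≤ h univ := by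
  have hcompl : (g j)ᶜ = (univ.erase j).biUnion g := by
    ext x
    obtain ⟨i, -, hxi⟩ := mem_biUnion.1 (hcover ▸ mem_univ x)
    simp only [mem_compl, mem_biUnion, mem_erase, mem_univ, and_true]
    exact ⟨fun hxj => ⟨i, fun hij => hxj (hij ▸ hxi), hxi⟩,
      fun ⟨i, hij, hxi⟩ => disjoint_left.1 (hdisj i j hij) hxi⟩
  calc h (g j) + h (g j)ᶜ ≤ h (g j) + ∑ i ∈ univ.erase j, h (g i) := by
        rw [hcompl]
        exact add_le_add le_rfl
          (hh.le_sum_of_pairwiseDisjoint h_empty fun a _ b _ hab => hdisj a b hab)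
    _ = ∑ i, h (g i) := add_sum_erase _ (fun i => h (g i)) (mem_univ j)
    _ ≤ h univ := hsum

end IsSubmodular

lemma restrict_eq_restrict_iff {Ω α β : Type*} {X : α → Ω → β} {S : Finset α} {ω ω' : Ω} :
    (fun i : {x // x ∈ S} => X i ω') = (fun i : {x // x ∈ S} => X i ω) ↔
      ∀ x ∈ S, X x ω' = X x ω := by
  simp [funext_iff]

section JointEntropy

variable {Ω β : Type*} [Fintype Ω] [Fintype β] [DecidableEq β] {m : ℕ} {μ : Ω → ℝ}

lemma ent_eq_entS {γ : Type*} [Fintype γ] [DecidableEq γ] (X : Fin m → Ω → β)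
    (S : Finset (Fin m)) {Y : Ω → γ} (hY : ∀ ω ω', Y ω' = Y ω ↔ ∀ x ∈ S, X x ω' = X x ω) :
    ent μ Y = entS μ X S :=
  ent_eq_ent_of_eq_iff fun ω ω' => (hY ω ω').trans restrict_eq_restrict_iff.symm

lemma entS_empty (hsum : ∑ ω, μ ω = 1) (X : Fin m → Ω → β) : entS μ X ∅ = 0 := by
  rw [← ent_eq_entS X ∅ (Y := fun _ => ()) (by simp), ent_const hsum]

lemma ent_pair_eq_entS_union (X : Fin m → Ω → β) (A B : Finset (Fin m)) :
    ent μ (fun ω => ((fun i : {x // x ∈ A} => X i ω), (fun i : {x // x ∈ B} => X i ω))) =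
      entS μ X (A ∪ B) :=
  ent_eq_entS X _ fun ω ω' => by
    simp only [Prod.ext_iff, restrict_eq_restrict_iff, forall_mem_union]

lemma miS_eq (X : Fin m → Ω → β) (A B : Finset (Fin m)) :
    miS μ X A B = entS μ X A + entS μ X B - entS μ X (A ∪ B) := by
  rw [miS, ent_pair_eq_entS_union]

lemma entS_isSubmodular (hμ : ∀ ω, 0 ≤ μ ω) (X : Fin m → Ω → β) :
    IsSubmodular (entS μ X) := by
  intro S T
  have h : entS μ X (S ∩ T) + ent μ (fun ω => ((fun i : {x // x ∈ S} => X i ω),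
      (fun i : {x // x ∈ S ∩ T} => X i ω), (fun i : {x // x ∈ T} => X i ω))) ≤
      ent μ (fun ω => ((fun i : {x // x ∈ S} => X i ω), (fun i : {x // x ∈ S ∩ T} => X i ω))) +
      ent μ (fun ω => ((fun i : {x // x ∈ S ∩ T} => X i ω), (fun i : {x // x ∈ T} => X i ω))) :=
    ent_submodular hμ _ _ _
  rw [ent_eq_entS X (S ∪ T), ent_pair_eq_entS_union, ent_pair_eq_entS_union,
    union_eq_left.2 inter_subset_left, union_eq_right.2 inter_subset_right] at h
  · linarith
  · intro ω ω'
    simp only [Prod.ext_iff, restrict_eq_restrict_iff, forall_mem_union, mem_inter]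
    grind

lemma entS_univ_le_sum (hμ : ∀ ω, 0 ≤ μ ω) (hsum : ∑ ω, μ ω = 1) (X : Fin m → Ω → β)
    {l : ℕ} {g : Fin l → Finset (Fin m)} (hdisj : ∀ i j, i ≠ j → Disjoint (g i) (g j))
    (hcover : univ.biUnion g = univ) :
    entS μ X univ ≤ ∑ j, entS μ X (g j) :=
  hcover ▸ (entS_isSubmodular hμ X).le_sum_of_pairwiseDisjoint (entS_empty hsum X)
    fun i _ j _ hij => hdisj i j hij

lemma sum_entS_eq_entS_univ_of_indep (hμ : ∀ ω, 0 ≤ μ ω) (X : Fin m → Ω → β) {k : ℕ}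
    (f : Fin k → Finset (Fin m)) (hcover : univ.biUnion f = univ)
    (hindep : ∀ v : (i : Fin k) → ({x // x ∈ f i} → β),
      (∑ ω ∈ univ.filter
          (fun ω => ∀ i, (fun x : {x // x ∈ f i} => X x ω) = v i), μ ω)
        = ∏ i, ∑ ω ∈ univ.filter
            (fun ω => (fun x : {x // x ∈ f i} => X x ω) = v i), μ ω) :
    ∑ i, entS μ X (f i) = entS μ X univ := by
  have hjoint := ent_pi_eq_sum_of_indep hμ (fun i ω (x : {x // x ∈ f i}) => X x ω) fun v =>
    (Finset.sum_congr (filter_congr fun ω _ => funext_iff) fun _ _ => rfl).trans (hindep v)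
  refine hjoint.symm.trans (ent_eq_entS X univ fun ω ω' => ?_)
  rw [funext_iff, ← hcover]
  simpa [restrict_eq_restrict_iff] using forall_comm

lemma partInfo_nonneg (hμ : ∀ ω, 0 ≤ μ ω) (hsum : ∑ ω, μ ω = 1) (X : Fin m → Ω → β)
    {l : ℕ} (hl : 1 < l) {g : Fin l → Finset (Fin m)}
    (hdisj : ∀ i j, i ≠ j → Disjoint (g i) (g j)) (hcover : univ.biUnion g = univ) :
    0 ≤ partInfo μ X g := by
  have hl' : (1 : ℝ) < l := by exact_mod_cast hl
  exact mul_nonneg (one_div_nonneg.2 (sub_nonneg.2 hl'.le))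
    (sub_nonneg.2 (entS_univ_le_sum hμ hsum X hdisj hcover))

lemma partInfo_eq_zero_iff (X : Fin m → Ω → β) {l : ℕ} (hl : 1 < l)
    (g : Fin l → Finset (Fin m)) :
    partInfo μ X g = 0 ↔ ∑ j, entS μ X (g j) = entS μ X univ := by
  have hl' : (1 : ℝ) < l := by exact_mod_cast hl
  rw [partInfo, mul_eq_zero, sub_eq_zero, or_iff_right (one_div_ne_zero (sub_ne_zero.2 hl'.ne'))]

end JointEntropy

theorem stmt13_general {Ω β : Type*} [Fintype Ω] [Fintype β] [DecidableEq β]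
    (m k : ℕ)
    (μ : Ω → ℝ) (hμ : ∀ ω, 0 ≤ μ ω) (hsum : ∑ ω, μ ω = 1)
    (X : Fin m → Ω → β) (f : Fin k → Finset (Fin m))
    (hcover : Finset.univ.biUnion f = (Finset.univ : Finset (Fin m)))
    (hne : ∀ i, (f i).Nonempty)
    (hindep : ∀ v : (i : Fin k) → ({x // x ∈ f i} → β),
      (∑ ω ∈ univ.filter
          (fun ω => ∀ i, (fun x : {x // x ∈ f i} => X x ω) = v i), μ ω)
        = ∏ i, ∑ ω ∈ univ.filter
            (fun ω => (fun x : {x // x ∈ f i} => X x ω) = v i), μ ω) :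
    partInfo μ X f = 0 ∧
    (∀ (l : ℕ), 1 < l → ∀ g : Fin l → Finset (Fin m),
      (∀ i j, i ≠ j → Disjoint (g i) (g j)) →
      Finset.univ.biUnion g = (Finset.univ : Finset (Fin m)) →
      (∀ i, (g i).Nonempty) →
      partInfo μ X f ≤ partInfo μ X g) ∧
    ((∀ i : Fin k, ∀ A B : Finset (Fin m), A.Nonempty → B.Nonempty →
        Disjoint A B → A ∪ B = f i → 0 < miS μ X A B) →
      ∀ (l : ℕ), 1 < l → ∀ g : Fin l → Finset (Fin m),
        (∀ i j, i ≠ j → Disjoint (g i) (g j)) →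
        Finset.univ.biUnion g = (Finset.univ : Finset (Fin m)) →
        (∀ i, (g i).Nonempty) →
        partInfo μ X g = 0 →
        ∀ i : Fin k, ∃ j : Fin l, f i ⊆ g j) := by
  have hf : partInfo μ X f = 0 := by
    rw [partInfo, sum_entS_eq_entS_univ_of_indep hμ X f hcover hindep, sub_self, mul_zero]
  refine ⟨hf, fun l hl g hdisj hcover' _ => hf ▸ partInfo_nonneg hμ hsum X hl hdisj hcover', ?_⟩
  intro hpos l hl g hdisj hcover' _ hg i
  obtain ⟨x, hxf⟩ := hne i
  obtain ⟨j, -, hxg⟩ := mem_biUnion.1 (hcover' ▸ mem_univ x)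
  refine ⟨j, ?_⟩
  by_contra hsub
  have hsub_entS := entS_isSubmodular hμ X
  have hsplit := hsub_entS.inter_add_sdiff_le (hsub_entS.add_compl_le_of_sum_le
    (entS_empty hsum X) hdisj hcover' ((partInfo_eq_zero_iff X hl g).1 hg).le j) (f i)
  have hmi := hpos i _ _ (sdiff_nonempty.2 hsub) ⟨x, mem_inter.2 ⟨hxf, hxg⟩⟩
    (disjoint_sdiff_inter _ _) (sdiff_union_inter _ _)
  rw [miS_eq, sdiff_union_inter] at hmi
  linarith

/-- If the blocks of the partition `P*` (given by `f`) are mutually independent and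
`|P*| > 1`, then `I_{P*} = 0` and `P*` minimizes the partition information over all
partitions with more than one cluster.  Moreover, if within each cluster of `P*` any two
complementary sub-groups have strictly positive mutual information, then every partition `P`
with `I_P = 0` is coarser than `P*`: each cluster of `P*` is contained in a cluster of `P`. -/
theorem stmt13 {Ω β : Type*} [Fintype Ω] [Fintype β] [DecidableEq β]
    (m k : ℕ) (hk : 1 < k)
    (μ : Ω → ℝ) (hμ : ∀ ω, 0 ≤ μ ω) (hsum : ∑ ω, μ ω = 1)
    (X : Fin m → Ω → β) (f : Fin k → Finset (Fin m))
    (hdisj : ∀ i j, i ≠ j → Disjoint (f i) (f j))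
    (hcover : Finset.univ.biUnion f = (Finset.univ : Finset (Fin m)))
    (hne : ∀ i, (f i).Nonempty)
    (hindep : ∀ v : (i : Fin k) → ({x // x ∈ f i} → β),
      (∑ ω ∈ univ.filter
          (fun ω => ∀ i, (fun x : {x // x ∈ f i} => X x ω) = v i), μ ω)
        = ∏ i, ∑ ω ∈ univ.filter
            (fun ω => (fun x : {x // x ∈ f i} => X x ω) = v i), μ ω) :
    partInfo μ X f = 0 ∧
    (∀ (l : ℕ), 1 < l → ∀ g : Fin l → Finset (Fin m),
      (∀ i j, i ≠ j → Disjoint (g i) (g j)) →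
      Finset.univ.biUnion g = (Finset.univ : Finset (Fin m)) →
      (∀ i, (g i).Nonempty) →
      partInfo μ X f ≤ partInfo μ X g) ∧
    ((∀ i : Fin k, ∀ A B : Finset (Fin m), A.Nonempty → B.Nonempty →
        Disjoint A B → A ∪ B = f i → 0 < miS μ X A B) →
      ∀ (l : ℕ), 1 < l → ∀ g : Fin l → Finset (Fin m),
        (∀ i j, i ≠ j → Disjoint (g i) (g j)) →
        Finset.univ.biUnion g = (Finset.univ : Finset (Fin m)) →
        (∀ i, (g i).Nonempty) →
        partInfo μ X g = 0 →
        ∀ i : Fin k, ∃ j : Fin l, f i ⊆ g j) :=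
  stmt13_general m k μ hμ hsum X f hcover hne hindep
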